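/- Let c(n) denote the n-th Fourier coefficient of the modular j-function, and suppose c(n) ~ e^{4π√n}/(√2 n^{3/4}) as n → ∞ with all c(n) positive integers. Then for n, k → ∞ with n/k → ∞, the n-th Fourier coefficient of j^k, which equals the sum over all compositions a₁ + ⋯ + a_k = n of positive integers of the product c(a₁)⋯c(a_k), is bounded below by e^{Ω(√(nk))}. -/

import Mathlib

open Real Filter Finset

/-- The `n`-th Fourier coefficient of `j^k`: the sum, over all compositions
`a₁ + ⋯ + a_k = n` into positive integers, of `c(a₁)⋯c(a_k)`. -/
noncomputable def powerCoeff (c : ℕ → ℕ) (k n : ℕ) : ℕ :=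
  ∑ a ∈ (Finset.Nat.antidiagonalTuple k n).filter fun a => ∀ i, 1 ≤ a i, ∏ i, c (a i)

/-!
Each `c(m)` with `m` large is at least `e^{√m}`, since `e^{4π√m}` beats `e^{√m}` and the
polynomial factor `m^{3/4}`. Splitting `n` into `k` parts as equal as possible, each part is at
least `⌊n/k⌋ ≥ n/(2k)`, so the single corresponding term of `powerCoeff c k n` is at least
`e^{k √(n/(2k))} ≥ e^{√(nk)/2}`.
-/

lemma Asymptotics.IsEquivalent.eventually_le_of_tendsto_div {α : Type*} {l : Filter α}
    {u v w : α → ℝ} (huv : Asymptotics.IsEquivalent l u v) (hw : ∀ᶠ x in l, 0 < w x)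
    (hvw : Tendsto (v / w) l atTop) : ∀ᶠ x in l, w x ≤ u x := by
  have huw : Tendsto (u / w) l atTop :=
    (huv.div .refl).symm.tendsto_atTop hvw
  filter_upwards [huw.eventually_ge_atTop 1, hw] with x hx hwx
  exact (one_le_div hwx).mp hx

lemma tendsto_petersson_div_exp_sqrt :
    Tendsto (fun m : ℕ => exp (4 * π * √m) / (√2 * (m : ℝ) ^ ((3 : ℝ) / 4)) / exp √m)
      atTop atTop := by
  have hsqrt : Tendsto (fun m : ℕ => √(m : ℝ)) atTop atTop :=
    tendsto_sqrt_atTop.comp tendsto_natCast_atTop_atTop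
  have hexp : Tendsto (fun x : ℝ => exp ((4 * π - 1) * x) / x ^ ((3 : ℝ) / 2) / √2)
      atTop atTop :=
    (tendsto_exp_mul_div_rpow_atTop _ _ (by linarith [pi_gt_three])).atTop_div_const
      (by positivity)
  refine (hexp.comp hsqrt).congr fun m => ?_
  have hpow : (√(m : ℝ)) ^ ((3 : ℝ) / 2) = (m : ℝ) ^ ((3 : ℝ) / 4) := by
    rw [sqrt_eq_rpow, ← rpow_mul m.cast_nonneg]
    norm_num
  simp only [Function.comp_apply, hpow, div_div, sub_mul, one_mul, exp_sub]
  ring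

lemma eventually_exp_sqrt_le {c : ℕ → ℕ}
    (hasymp : Asymptotics.IsEquivalent atTop (fun n : ℕ => (c n : ℝ))
      (fun n : ℕ => exp (4 * π * √n) / (√2 * (n : ℝ) ^ ((3 : ℝ) / 4)))) :
    ∀ᶠ m : ℕ in atTop, exp √m ≤ c m :=
  hasymp.eventually_le_of_tendsto_div (.of_forall fun _ => exp_pos _)
    tendsto_petersson_div_exp_sqrt

lemma prod_le_powerCoeff (c : ℕ → ℕ) {k n : ℕ} {a : Fin k → ℕ} (hsum : ∑ i, a i = n)
    (hpos : ∀ i, 1 ≤ a i) : ∏ i, c (a i) ≤ powerCoeff c k n :=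
  single_le_sum (f := fun a : Fin k → ℕ => ∏ i, c (a i)) (fun _ _ => Nat.zero_le _)
    (mem_filter.mpr ⟨Finset.Nat.mem_antidiagonalTuple.mpr hsum, hpos⟩)

def balancedComposition (k n : ℕ) (i : Fin k) : ℕ :=
  n / k + if (i : ℕ) < n % k then 1 else 0

lemma div_le_balancedComposition (k n : ℕ) (i : Fin k) : n / k ≤ balancedComposition k n i :=
  Nat.le_add_right _ _

lemma sum_balancedComposition {k : ℕ} (hk : 0 < k) (n : ℕ) :
    ∑ i, balancedComposition k n i = n := by
  have hfilter : {i ∈ range k | i < n % k} = range (n % k) := by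
    ext i
    simp only [mem_filter, mem_range]
    have := Nat.mod_lt n hk
    omega
  calc ∑ i, balancedComposition k n i
      = ∑ i ∈ range k, (n / k + if i < n % k then 1 else 0) :=
        Fin.sum_univ_eq_sum_range (fun i => n / k + if i < n % k then 1 else 0) k
    _ = k * (n / k) + n % k := by
        rw [sum_add_distrib, sum_const, card_range, sum_boole, hfilter, card_range, smul_eq_mul,
          Nat.cast_id]
    _ = n := Nat.div_add_mod n k

lemma exp_mul_sqrt_div_le_powerCoeff {c : ℕ → ℕ} {N k n : ℕ}
    (hc : ∀ m ≥ N, exp √m ≤ c m) (hN : N ≤ n / k) (hn : 1 ≤ n / k) :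
    exp (k * √(n / k : ℕ)) ≤ powerCoeff c k n := by
  have hk : 0 < k := Nat.pos_of_ne_zero fun h => by simp [h] at hn
  set a := balancedComposition k n
  have hfactor : ∀ i, exp √(n / k : ℕ) ≤ c (a i) := fun i =>
    (exp_le_exp.mpr (sqrt_le_sqrt (by exact_mod_cast div_le_balancedComposition k n i))).trans
      (hc _ (hN.trans (div_le_balancedComposition k n i)))
  calc exp (k * √(n / k : ℕ)) = ∏ _i : Fin k, exp √(n / k : ℕ) := by
        rw [prod_const, card_univ, Fintype.card_fin, ← exp_nat_mul]
    _ ≤ ∏ i, (c (a i) : ℝ) := prod_le_prod (fun _ _ => (exp_pos _).le) fun i _ => hfactor i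
    _ ≤ powerCoeff c k n := by
        exact_mod_cast prod_le_powerCoeff c (sum_balancedComposition hk n)
          fun i => hn.trans (div_le_balancedComposition k n i)

lemma half_sqrt_mul_le_mul_sqrt_div {k n : ℕ} (hnk : 2 ≤ (n : ℝ) / k) :
    1 / 2 * √((n : ℝ) * k) ≤ k * √(n / k : ℕ) := by
  have hq : (n : ℝ) / k / 2 ≤ (n / k : ℕ) := by
    have := Nat.lt_floor_add_one ((n : ℝ) / k)
    rw [Nat.floor_div_eq_div] at this
    linarith
  have hk' : (0 : ℝ) < k := Nat.cast_pos.mpr (Nat.pos_of_ne_zero fun h => by norm_num [h] at hnk)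
  have hsq : (n : ℝ) * k / 4 ≤ (k : ℝ) ^ 2 * (n / k : ℕ) := by
    have := mul_le_mul_of_nonneg_left hq (sq_nonneg (k : ℝ))
    rw [show (k : ℝ) ^ 2 * ((n : ℝ) / k / 2) = n * k / 2 by field_simp] at this
    linarith [mul_nonneg n.cast_nonneg hk'.le]
  have hrhs : (k : ℝ) * √(n / k : ℕ) = √((k : ℝ) ^ 2 * (n / k : ℕ)) := by
    rw [sqrt_mul (sq_nonneg _), sqrt_sq hk'.le]
  rw [hrhs, le_sqrt (by positivity) (by positivity), mul_pow, sq_sqrt (by positivity)]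
  linarith

theorem powerCoeff_lower_bound_general (c : ℕ → ℕ)
    (hasymp : Asymptotics.IsEquivalent atTop (fun n : ℕ => (c n : ℝ))
      (fun n : ℕ => Real.exp (4 * π * Real.sqrt n) / (Real.sqrt 2 * (n : ℝ) ^ ((3 : ℝ) / 4))))
    (n k : ℕ → ℕ)
    (hnk : Tendsto (fun i => (n i : ℝ) / (k i : ℝ)) atTop atTop) :
    ∃ δ : ℝ, 0 < δ ∧ ∀ᶠ i in atTop,
      Real.exp (δ * Real.sqrt ((n i : ℝ) * (k i : ℝ))) ≤ (powerCoeff c (k i) (n i) : ℝ) := by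
  obtain ⟨N, hN⟩ := eventually_atTop.mp (eventually_exp_sqrt_le hasymp)
  refine ⟨1 / 2, by norm_num, ?_⟩
  filter_upwards [hnk.eventually_ge_atTop (max N 2 : ℕ)] with i hnki
  have hdiv : max N 2 ≤ n i / k i := by
    rw [← Nat.floor_div_eq_div (K := ℝ)]
    exact Nat.le_floor hnki
  calc exp (1 / 2 * √((n i : ℝ) * k i))
      ≤ exp (k i * √(n i / k i : ℕ)) :=
        exp_le_exp.mpr (half_sqrt_mul_le_mul_sqrt_div (le_trans (by simp) hnki))
    _ ≤ powerCoeff c (k i) (n i) :=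
        exp_mul_sqrt_div_le_powerCoeff hN (le_of_max_le_left hdiv) (by omega)

/-- If `c(n)` are positive integers with `c(n) ~ e^{4π√n}/(√2 n^{3/4})` (the Fourier
coefficients of the modular `j`-function), then as `n, k → ∞` with `n/k → ∞`, the `n`-th
Fourier coefficient of `j^k`, i.e. the sum over all compositions `a₁ + ⋯ + a_k = n` of
`c(a₁)⋯c(a_k)`, is bounded below by `e^{Ω(√(nk))}`. -/
theorem powerCoeff_lower_bound (c : ℕ → ℕ) (hpos : ∀ n, 1 ≤ n → 0 < c n)
    (hasymp : Asymptotics.IsEquivalent atTop (fun n : ℕ => (c n : ℝ))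
      (fun n : ℕ => Real.exp (4 * π * Real.sqrt n) / (Real.sqrt 2 * (n : ℝ) ^ ((3 : ℝ) / 4))))
    (n k : ℕ → ℕ) (hk : Tendsto k atTop atTop)
    (hnk : Tendsto (fun i => (n i : ℝ) / (k i : ℝ)) atTop atTop) :
    ∃ δ : ℝ, 0 < δ ∧ ∀ᶠ i in atTop,
      Real.exp (δ * Real.sqrt ((n i : ℝ) * (k i : ℝ))) ≤ (powerCoeff c (k i) (n i) : ℝ) :=
  powerCoeff_lower_bound_general c hasymp n k hnk
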